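/- arXiv:1301.2202 — 3 statements merged into one kernel-verified Lean document; each statement's English description precedes it below -/
import Mathlib

section
/- Let ψ : ℝ² → ℝ be three times continuously differentiable on an open set Ω ⊆ ℝ², and suppose its gradient ∇ψ is nonvanishing at a point p ∈ Ω. Then at p one has the identity Δ log √((∂ₓψ)² + (∂ᵧψ)²) = ∂ₓ[ (Δψ · ∂ₓψ) / ((∂ₓψ)² + (∂ᵧψ)²) ] + ∂ᵧ[ (Δψ · ∂ᵧψ) / ((∂ₓψ)² + (∂ᵧψ)²) ], where Δ = ∂ₓ² + ∂ᵧ² is the Euclidean Laplacian. -/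
open Real

/-- Partial derivative along the `i`-th coordinate direction in `Fin d → ℝ`. -/
noncomputable def pd {d : ℕ} (i : Fin d) (f : (Fin d → ℝ) → ℝ) (x : Fin d → ℝ) : ℝ :=
  fderiv ℝ f x (Pi.single i 1)

/-- The flat Laplacian on `Fin d → ℝ`. -/
noncomputable def lap {d : ℕ} (f : (Fin d → ℝ) → ℝ) (x : Fin d → ℝ) : ℝ :=
  ∑ i, pd i (pd i f) x

/-!
Write `u = ∂ₓψ`, `v = ∂ᵧψ`, `q = u² + v²`. The gradient of `log √q` is `(u ∇u + v ∇v) / q`, and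
since `∂ᵧu = ∂ₓv`, the field `Δψ (u, v) / q` differs from it by the rotated gradient `(∂ᵧθ, -∂ₓθ)`
of a local argument `θ` of `u + v I`. That field is divergence free because the second partials of
`θ` commute; `θ` itself is never needed, only the formula for its partials.
-/

open Filter Topology

section PartialDerivative

variable {d : ℕ} {f g : (Fin d → ℝ) → ℝ} {x : Fin d → ℝ} {i : Fin d}

lemma pd_congr (h : f =ᶠ[𝓝 x] g) : pd i f x = pd i g x := by
  rw [pd, pd, h.fderiv_eq]

lemma HasFDerivAt.pd_eq {f' : (Fin d → ℝ) →L[ℝ] ℝ} (h : HasFDerivAt f f' x) :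
    pd i f x = f' (Pi.single i 1) := by
  rw [pd, h.fderiv]

lemma pd_add (hf : DifferentiableAt ℝ f x) (hg : DifferentiableAt ℝ g x) :
    pd i (fun y => f y + g y) x = pd i f x + pd i g x :=
  (hf.hasFDerivAt.add hg.hasFDerivAt).pd_eq

lemma pd_sub (hf : DifferentiableAt ℝ f x) (hg : DifferentiableAt ℝ g x) :
    pd i (fun y => f y - g y) x = pd i f x - pd i g x :=
  (hf.hasFDerivAt.sub hg.hasFDerivAt).pd_eq

lemma pd_mul (hf : DifferentiableAt ℝ f x) (hg : DifferentiableAt ℝ g x) :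
    pd i (fun y => f y * g y) x = pd i f x * g x + f x * pd i g x := by
  refine (hf.hasFDerivAt.mul hg.hasFDerivAt).pd_eq.trans ?_
  simp [pd]
  ring

lemma pd_pow (hf : DifferentiableAt ℝ f x) (n : ℕ) :
    pd i (fun y => f y ^ n) x = n * f x ^ (n - 1) * pd i f x := by
  rw [(hf.hasFDerivAt.pow n).pd_eq]
  simp [pd]

lemma pd_div (hf : DifferentiableAt ℝ f x) (hg : DifferentiableAt ℝ g x) (hx : g x ≠ 0) :
    pd i (fun y => f y / g y) x = (pd i f x * g x - f x * pd i g x) / g x ^ 2 := by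
  have hinv := (hasDerivAt_inv hx).comp_hasFDerivAt x hg.hasFDerivAt
  refine (hf.hasFDerivAt.mul hinv).pd_eq.trans ?_
  simp [pd]
  field_simp
  ring

lemma ContDiffAt.contDiffAt_pd {n m : WithTop ℕ∞} (hf : ContDiffAt ℝ n f x) (hmn : m + 1 ≤ n)
    (i : Fin d) : ContDiffAt ℝ m (pd i f) x :=
  (hf.fderiv_right hmn).clm_apply contDiffAt_const

lemma ContDiffAt.differentiableAt_pd {n : WithTop ℕ∞} (hf : ContDiffAt ℝ n f x) (hn : 2 ≤ n)
    (i : Fin d) : DifferentiableAt ℝ (pd i f) x :=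
  (hf.contDiffAt_pd (m := 1) hn i).differentiableAt one_ne_zero

lemma pd_pd_eq_fderiv_fderiv (hf : DifferentiableAt ℝ (fderiv ℝ f) x) (i j : Fin d) :
    pd i (pd j f) x = fderiv ℝ (fderiv ℝ f) x (Pi.single i 1) (Pi.single j 1) :=
  (hf.hasFDerivAt.clm_apply (hasFDerivAt_const (Pi.single j 1) x)).pd_eq.trans (by simp)

lemma pd_comm (hf : ContDiffAt ℝ 2 f x) (i j : Fin d) :
    pd i (pd j f) x = pd j (pd i f) x := by
  have hf' : DifferentiableAt ℝ (fderiv ℝ f) x :=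
    (hf.fderiv_right (m := 1) (by norm_num)).differentiableAt (by norm_num)
  rw [pd_pd_eq_fderiv_fderiv hf', pd_pd_eq_fderiv_fderiv hf',
    hf.isSymmSndFDerivAt (by simp [minSmoothness_of_isRCLikeNormedField])]

end PartialDerivative

section Polar

variable {d : ℕ} {a b : (Fin d → ℝ) → ℝ} {x : Fin d → ℝ}

lemma pd_log_sqrt_sq_add_sq (ha : DifferentiableAt ℝ a x) (hb : DifferentiableAt ℝ b x)
    (hab : a x ^ 2 + b x ^ 2 ≠ 0) (i : Fin d) :
    pd i (fun y => log (sqrt (a y ^ 2 + b y ^ 2))) x =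
      (a x * pd i a x + b x * pd i b x) / (a x ^ 2 + b x ^ 2) := by
  have hlog : (fun y => log (sqrt (a y ^ 2 + b y ^ 2))) =
      fun y => 2⁻¹ * log (a y ^ 2 + b y ^ 2) :=
    funext fun y => (log_sqrt (by positivity)).trans (div_eq_inv_mul _ _)
  rw [hlog]
  have hq := (ha.hasFDerivAt.pow 2).add (hb.hasFDerivAt.pow 2)
  refine ((hq.log hab).const_mul 2⁻¹).pd_eq.trans ?_
  simp [pd]
  field_simp

/-- The `i`-th partial derivative of a local argument of `a + b * I`, wherever `a² + b² ≠ 0`. -/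
noncomputable def pdArg (i : Fin d) (a b : (Fin d → ℝ) → ℝ) (x : Fin d → ℝ) : ℝ :=
  (a x * pd i b x - b x * pd i a x) / (a x ^ 2 + b x ^ 2)

lemma ContDiffAt.differentiableAt_pdArg (ha : ContDiffAt ℝ 2 a x) (hb : ContDiffAt ℝ 2 b x)
    (hab : a x ^ 2 + b x ^ 2 ≠ 0) (i : Fin d) : DifferentiableAt ℝ (pdArg i a b) x := by
  have := ha.differentiableAt two_ne_zero
  have := hb.differentiableAt two_ne_zero
  have := ha.differentiableAt_pd le_rfl i
  have := hb.differentiableAt_pd le_rfl i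
  unfold pdArg
  fun_prop (disch := assumption)

lemma pd_pdArg (ha : ContDiffAt ℝ 2 a x) (hb : ContDiffAt ℝ 2 b x)
    (hab : a x ^ 2 + b x ^ 2 ≠ 0) (i j : Fin d) :
    pd j (pdArg i a b) x =
      (pd j a x * pd i b x - pd j b x * pd i a x + (a x * pd j (pd i b) x - b x * pd j (pd i a) x))
        / (a x ^ 2 + b x ^ 2)
      - 2 * (a x * pd i b x - b x * pd i a x) * (a x * pd j a x + b x * pd j b x)
        / (a x ^ 2 + b x ^ 2) ^ 2 := by
  have hda := ha.differentiableAt two_ne_zero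
  have hdb := hb.differentiableAt two_ne_zero
  have hda' := ha.differentiableAt_pd le_rfl i
  have hdb' := hb.differentiableAt_pd le_rfl i
  unfold pdArg
  rw [pd_div (by fun_prop) (by fun_prop) hab, pd_sub (by fun_prop) (by fun_prop), pd_mul hda hdb',
    pd_mul hdb hda', pd_add (by fun_prop) (by fun_prop), pd_pow hda, pd_pow hdb]
  field_simp
  ring

lemma pd_pdArg_comm (ha : ContDiffAt ℝ 2 a x) (hb : ContDiffAt ℝ 2 b x)
    (hab : a x ^ 2 + b x ^ 2 ≠ 0) (i j : Fin d) :
    pd j (pdArg i a b) x = pd i (pdArg j a b) x := by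
  rw [pd_pdArg ha hb hab, pd_pdArg ha hb hab, pd_comm ha, pd_comm hb]
  field_simp
  ring

end Polar

lemma lap_log_sqrt_sq_add_sq {u v : (Fin 2 → ℝ) → ℝ} {p : Fin 2 → ℝ}
    (hu : ∀ᶠ x in 𝓝 p, ContDiffAt ℝ 2 u x) (hv : ∀ᶠ x in 𝓝 p, ContDiffAt ℝ 2 v x)
    (hcurl : pd 1 u =ᶠ[𝓝 p] pd 0 v) (huv : u p ^ 2 + v p ^ 2 ≠ 0) :
    lap (fun x => log (sqrt (u x ^ 2 + v x ^ 2))) p =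
      pd 0 (fun x => (pd 0 u x + pd 1 v x) * u x / (u x ^ 2 + v x ^ 2)) p +
      pd 1 (fun x => (pd 0 u x + pd 1 v x) * v x / (u x ^ 2 + v x ^ 2)) p := by
  have hu₂ : ContDiffAt ℝ 2 u p := hu.self_of_nhds
  have hv₂ : ContDiffAt ℝ 2 v p := hv.self_of_nhds
  have huv_near : ∀ᶠ x in 𝓝 p, u x ^ 2 + v x ^ 2 ≠ 0 :=
    ((hu₂.continuousAt.pow 2).add (hv₂.continuousAt.pow 2)).eventually_ne huv
  have hgrad (i : Fin 2) : pd i (fun x => log (sqrt (u x ^ 2 + v x ^ 2))) =ᶠ[𝓝 p]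
      fun x => (u x * pd i u x + v x * pd i v x) / (u x ^ 2 + v x ^ 2) := by
    filter_upwards [hu, hv, huv_near] with x hux hvx hx
    exact pd_log_sqrt_sq_add_sq (hux.differentiableAt two_ne_zero)
      (hvx.differentiableAt two_ne_zero) hx i
  have hdiff (i : Fin 2) : DifferentiableAt ℝ
      (fun x => (u x * pd i u x + v x * pd i v x) / (u x ^ 2 + v x ^ 2)) p := by
    have := hu₂.differentiableAt two_ne_zero
    have := hv₂.differentiableAt two_ne_zero
    have := hu₂.differentiableAt_pd le_rfl i
    have := hv₂.differentiableAt_pd le_rfl i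
    fun_prop (disch := assumption)
  have h₀ : (fun x => (pd 0 u x + pd 1 v x) * u x / (u x ^ 2 + v x ^ 2)) =ᶠ[𝓝 p]
      fun x => (u x * pd 0 u x + v x * pd 0 v x) / (u x ^ 2 + v x ^ 2) + pdArg 1 u v x := by
    filter_upwards [hcurl] with x hx
    rw [pdArg, ← hx]
    ring
  have h₁ : (fun x => (pd 0 u x + pd 1 v x) * v x / (u x ^ 2 + v x ^ 2)) =ᶠ[𝓝 p]
      fun x => (u x * pd 1 u x + v x * pd 1 v x) / (u x ^ 2 + v x ^ 2) - pdArg 0 u v x := by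
    filter_upwards [hcurl] with x hx
    rw [pdArg, hx]
    ring
  rw [lap, Fin.sum_univ_two, pd_congr (hgrad 0), pd_congr (hgrad 1), pd_congr h₀, pd_congr h₁,
    pd_add (hdiff 0) (hu₂.differentiableAt_pdArg hv₂ huv 1),
    pd_sub (hdiff 1) (hu₂.differentiableAt_pdArg hv₂ huv 0), pd_pdArg_comm hu₂ hv₂ huv 1 0]
  ring

theorem scalar_curvature_identity_2D
    (Ω : Set (Fin 2 → ℝ)) (hΩ : IsOpen Ω)
    (ψ : (Fin 2 → ℝ) → ℝ) (hψ : ContDiffOn ℝ 3 ψ Ω)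
    (p : Fin 2 → ℝ) (hp : p ∈ Ω)
    (hgrad : (pd 0 ψ p) ^ 2 + (pd 1 ψ p) ^ 2 ≠ 0) :
    lap (fun x => Real.log (Real.sqrt ((pd 0 ψ x) ^ 2 + (pd 1 ψ x) ^ 2))) p =
      pd 0 (fun x =>
          (lap ψ x * pd 0 ψ x) / ((pd 0 ψ x) ^ 2 + (pd 1 ψ x) ^ 2)) p +
      pd 1 (fun x =>
          (lap ψ x * pd 1 ψ x) / ((pd 0 ψ x) ^ 2 + (pd 1 ψ x) ^ 2)) p := by
  have hψ₃ : ∀ᶠ x in 𝓝 p, ContDiffAt ℝ 3 ψ x :=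
    (hΩ.eventually_mem hp).mono fun x hx => hψ.contDiffAt (hΩ.mem_nhds hx)
  have hcurl : pd 1 (pd 0 ψ) =ᶠ[𝓝 p] pd 0 (pd 1 ψ) :=
    hψ₃.mono fun x hx => pd_comm (hx.of_le (by norm_num)) 1 0
  have key := lap_log_sqrt_sq_add_sq (hψ₃.mono fun x hx => hx.contDiffAt_pd le_rfl 0)
    (hψ₃.mono fun x hx => hx.contDiffAt_pd le_rfl 1) hcurl hgrad
  simpa only [lap, Fin.sum_univ_two] using key
end

section
/- Let k₁, …, kₙ be real numbers with n ≥ 3. Let e₂, e₃, e₄ denote sums over strictly increasing index tuples of products of 2, 3, 4 of the k's, and set 𝓡 = 2e₂ (the scalar curvature). Define T := Σℓ kℓ (the trace of the Weingarten map), Q := Σℓ kℓ², RR := Σℓ ((T − kℓ)kℓ)² (the squared Ricci tensor norm Σᵢⱼ RⁱʲRᵢⱼ in principal-curvature coordinates, where Rᵢᵢ has eigenvalue (T−kᵢ)kᵢ), and G·b := Σℓ ((T−kℓ)kℓ − 𝓡/2)·kℓ, where 𝓡 = T² − Q (so that bᵐₘ Gⁱʲbᵢⱼ = T · Σℓ ((T−kℓ)kℓ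 − 𝓡/2)kℓ). Then (1/3)·T·Σℓ ((T−kℓ)kℓ − 𝓡/2)kℓ − Σℓ ((T−kℓ)kℓ)² + (1/2)𝓡² = Σ_{ℓ} Σ_{i<j, i≠ℓ, j≠ℓ} k_i k_j k_ℓ² + 8 Σ_{i<j<ℓ<m} k_i k_j k_ℓ k_m. -/
open Finset
lemma pair_sum {ι : Type*} [LinearOrder ι] (k : ι → ℝ) (s : Finset ι) :
    2 * ∑ i ∈ s, ∑ j ∈ s.filter (fun j => i < j), k i * k j
      = (∑ i ∈ s, k i) ^ 2 - ∑ i ∈ s, k i ^ 2 := by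
  induction s using Finset.induction_on_max with
  | empty => simp
  | insert a t hmax ih =>
    have ha : a ∉ t := fun h => lt_irrefl a (hmax a h)
    have hfa : (insert a t).filter (fun j => a < j) = ∅ :=
      Finset.filter_eq_empty_iff.mpr (by
        intro x hx
        rcases Finset.mem_insert.mp hx with h | h
        · simp [h]
        · exact not_lt.mpr (hmax x h).le)
    have hin : ∀ i ∈ t,
        ∑ j ∈ (insert a t).filter (fun j => i < j), k i * k j
          = k i * k a + ∑ j ∈ t.filter (fun j => i < j), k i * k j := by
      intro i hi
      rw [Finset.filter_insert, if_pos (hmax i hi),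
        Finset.sum_insert (by simp [ha])]
    rw [Finset.sum_insert ha, hfa, Finset.sum_empty,
      Finset.sum_congr rfl hin, Finset.sum_add_distrib,
      Finset.sum_insert ha, Finset.sum_insert ha, ← Finset.sum_mul]
    linear_combination ih

lemma triple_sum {ι : Type*} [LinearOrder ι] (k : ι → ℝ) (s : Finset ι) :
    6 * ∑ i ∈ s, ∑ j ∈ s.filter (fun j => i < j),
        ∑ l ∈ s.filter (fun l => j < l), k i * k j * k l
      = (∑ i ∈ s, k i) ^ 3 - 3 * (∑ i ∈ s, k i) * (∑ i ∈ s, k i ^ 2)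
        + 2 * ∑ i ∈ s, k i ^ 3 := by
  induction s using Finset.induction_on_max with
  | empty => simp
  | insert a t hmax ih =>
    have ha : a ∉ t := fun h => lt_irrefl a (hmax a h)
    have hfa : (insert a t).filter (fun j => a < j) = ∅ :=
      Finset.filter_eq_empty_iff.mpr (by
        intro x hx
        rcases Finset.mem_insert.mp hx with h | h
        · simp [h]
        · exact not_lt.mpr (hmax x h).le)
    have hin : ∀ i ∈ t,
        ∑ j ∈ (insert a t).filter (fun j => i < j),
          ∑ l ∈ (insert a t).filter (fun l => j < l), k i * k j * k l
        = ∑ j ∈ t.filter (fun j => i < j),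
            (k i * k j * k a + ∑ l ∈ t.filter (fun l => j < l), k i * k j * k l) := by
      intro i hi
      rw [Finset.filter_insert, if_pos (hmax i hi),
        Finset.sum_insert (by simp [ha]), hfa, Finset.sum_empty]
      rw [zero_add]
      refine Finset.sum_congr rfl fun j hj => ?_
      have hjt : j ∈ t := (Finset.mem_filter.mp hj).1
      rw [Finset.filter_insert, if_pos (hmax j hjt),
        Finset.sum_insert (by simp [ha])]
    rw [Finset.sum_insert ha, hfa, Finset.sum_empty, Finset.sum_congr rfl hin]
    simp only [Finset.sum_add_distrib, ← Finset.sum_mul]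
    rw [Finset.sum_insert ha, Finset.sum_insert ha, Finset.sum_insert ha]
    linear_combination ih + 3 * k a * pair_sum k t

lemma quad_sum {ι : Type*} [LinearOrder ι] (k : ι → ℝ) (s : Finset ι) :
    24 * ∑ i ∈ s, ∑ j ∈ s.filter (fun j => i < j),
        ∑ l ∈ s.filter (fun l => j < l),
          ∑ m ∈ s.filter (fun m => l < m), k i * k j * k l * k m
      = (∑ i ∈ s, k i) ^ 4 - 6 * (∑ i ∈ s, k i ^ 2) * (∑ i ∈ s, k i) ^ 2
        + 3 * (∑ i ∈ s, k i ^ 2) ^ 2 + 8 * (∑ i ∈ s, k i ^ 3) * (∑ i ∈ s, k i)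
        - 6 * ∑ i ∈ s, k i ^ 4 := by
  induction s using Finset.induction_on_max with
  | empty => simp
  | insert a t hmax ih =>
    have ha : a ∉ t := fun h => lt_irrefl a (hmax a h)
    have hfa : (insert a t).filter (fun j => a < j) = ∅ :=
      Finset.filter_eq_empty_iff.mpr (by
        intro x hx
        rcases Finset.mem_insert.mp hx with h | h
        · simp [h]
        · exact not_lt.mpr (hmax x h).le)
    have hin : ∀ i ∈ t,
        ∑ j ∈ (insert a t).filter (fun j => i < j),
          ∑ l ∈ (insert a t).filter (fun l => j < l),
            ∑ m ∈ (insert a t).filter (fun m => l < m), k i * k j * k l * k m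
        = ∑ j ∈ t.filter (fun j => i < j),
            ∑ l ∈ t.filter (fun l => j < l),
              (k i * k j * k l * k a
                + ∑ m ∈ t.filter (fun m => l < m), k i * k j * k l * k m) := by
      intro i hi
      rw [Finset.filter_insert, if_pos (hmax i hi),
        Finset.sum_insert (by simp [ha]), hfa, Finset.sum_empty, zero_add]
      refine Finset.sum_congr rfl fun j hj => ?_
      have hjt : j ∈ t := (Finset.mem_filter.mp hj).1
      rw [Finset.filter_insert, if_pos (hmax j hjt),
        Finset.sum_insert (by simp [ha]), hfa, Finset.sum_empty, zero_add]
      refine Finset.sum_congr rfl fun l hl => ?_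
      have hlt : l ∈ t := (Finset.mem_filter.mp hl).1
      rw [Finset.filter_insert, if_pos (hmax l hlt),
        Finset.sum_insert (by simp [ha])]
    rw [Finset.sum_insert ha, hfa, Finset.sum_empty,
      Finset.sum_congr rfl hin]
    simp only [Finset.sum_add_distrib, ← Finset.sum_mul]
    rw [Finset.sum_insert ha, Finset.sum_insert ha, Finset.sum_insert ha,
      Finset.sum_insert ha]
    linear_combination ih + 4 * k a * triple_sum k t

lemma cubic_sum_eval {n : ℕ} (k : Fin n → ℝ) (a b c d : ℝ) :
    ∑ ℓ : Fin n, (a * k ℓ + b * k ℓ ^ 2 + c * k ℓ ^ 3 + d * k ℓ ^ 4)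
      = a * (∑ m, k m) + b * (∑ m, k m ^ 2) + c * (∑ m, k m ^ 3)
        + d * (∑ m, k m ^ 4) := by
  simp [Finset.sum_add_distrib, Finset.mul_sum]

theorem curvature_quartic_identity (n : ℕ) (hn : 3 ≤ n) (k : Fin n → ℝ) :
    (1 / 3) * (∑ ℓ, k ℓ) *
        (∑ ℓ, (((∑ m, k m) - k ℓ) * k ℓ -
          ((∑ m, k m) ^ 2 - ∑ m, (k m) ^ 2) / 2) * k ℓ)
      - (∑ ℓ, (((∑ m, k m) - k ℓ) * k ℓ) ^ 2)
      + (1 / 2) * ((∑ m, k m) ^ 2 - ∑ m, (k m) ^ 2) ^ 2 =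
    (∑ ℓ, ∑ i ∈ Finset.univ.filter (fun i => i ≠ ℓ),
        ∑ j ∈ Finset.univ.filter (fun j => i < j ∧ j ≠ ℓ),
          k i * k j * (k ℓ) ^ 2)
      + 8 * ∑ i, ∑ j ∈ Finset.univ.filter (fun j => i < j),
          ∑ ℓ ∈ Finset.univ.filter (fun ℓ => j < ℓ),
            ∑ m ∈ Finset.univ.filter (fun m => ℓ < m),
              k i * k j * k ℓ * k m := by
  set S1 : ℝ := ∑ m, k m with hS1
  set S2 : ℝ := ∑ m, k m ^ 2 with hS2
  -- power sums 3 and 4 (as plain terms)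
  have hQ := quad_sum k (Finset.univ : Finset (Fin n))
  have e1 : (∑ ℓ, ((S1 - k ℓ) * k ℓ - (S1 ^ 2 - S2) / 2) * k ℓ)
      = (-((S1 ^ 2 - S2) / 2)) * S1 + S1 * S2 + (-1) * (∑ m, k m ^ 3)
        + 0 * (∑ m, k m ^ 4) := by
    rw [← cubic_sum_eval k]
    exact Finset.sum_congr rfl fun ℓ _ => by ring
  have e2 : (∑ ℓ, ((S1 - k ℓ) * k ℓ) ^ 2)
      = 0 * S1 + S1 ^ 2 * S2 + (-(2 * S1)) * (∑ m, k m ^ 3)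
        + 1 * (∑ m, k m ^ 4) := by
    rw [← cubic_sum_eval k]
    exact Finset.sum_congr rfl fun ℓ _ => by ring
  have hfil : ∀ ℓ i : Fin n, Finset.univ.filter (fun j => i < j ∧ j ≠ ℓ)
      = (Finset.univ.filter (fun j => j ≠ ℓ)).filter (fun j => i < j) := by
    intro ℓ i
    ext x
    simp [and_comm]
  have hs1 : ∀ ℓ : Fin n, ∑ i ∈ Finset.univ.filter (fun i => i ≠ ℓ), k i
      = S1 - k ℓ := by
    intro ℓ
    rw [Finset.filter_ne', Finset.sum_erase_eq_sub (Finset.mem_univ ℓ)]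
  have hs2 : ∀ ℓ : Fin n, ∑ i ∈ Finset.univ.filter (fun i => i ≠ ℓ), k i ^ 2
      = S2 - k ℓ ^ 2 := by
    intro ℓ
    rw [Finset.filter_ne', Finset.sum_erase_eq_sub (Finset.mem_univ ℓ)]
  have hA : 2 * (∑ ℓ, ∑ i ∈ Finset.univ.filter (fun i => i ≠ ℓ),
        ∑ j ∈ Finset.univ.filter (fun j => i < j ∧ j ≠ ℓ),
          k i * k j * (k ℓ) ^ 2)
      = (S1 ^ 2 - S2) * S2 + (-(2 * S1)) * (∑ m, k m ^ 3)
        + 2 * (∑ m, k m ^ 4) := by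
    rw [Finset.mul_sum]
    have step : ∀ ℓ : Fin n, 2 * (∑ i ∈ Finset.univ.filter (fun i => i ≠ ℓ),
          ∑ j ∈ Finset.univ.filter (fun j => i < j ∧ j ≠ ℓ),
            k i * k j * (k ℓ) ^ 2)
        = 0 * k ℓ + (S1 ^ 2 - S2) * k ℓ ^ 2 + (-(2 * S1)) * k ℓ ^ 3
          + 2 * k ℓ ^ 4 := by
      intro ℓ
      have hp := pair_sum k (Finset.univ.filter (fun i => i ≠ ℓ))
      rw [hs1 ℓ, hs2 ℓ] at hp
      calc 2 * (∑ i ∈ Finset.univ.filter (fun i => i ≠ ℓ),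
            ∑ j ∈ Finset.univ.filter (fun j => i < j ∧ j ≠ ℓ),
              k i * k j * (k ℓ) ^ 2)
          = 2 * ((∑ i ∈ Finset.univ.filter (fun i => i ≠ ℓ),
              ∑ j ∈ (Finset.univ.filter (fun j => j ≠ ℓ)).filter (fun j => i < j),
                k i * k j) * (k ℓ) ^ 2) := by
            simp only [hfil ℓ, ← Finset.sum_mul]
        _ = _ := by linear_combination (k ℓ) ^ 2 * hp
    rw [Finset.sum_congr rfl fun ℓ _ => step ℓ, cubic_sum_eval k, ← hS1, ← hS2]
    ring
  linear_combination (1/3 : ℝ) * S1 * e1 - e2 - (1/2 : ℝ) * hA - (1/3 : ℝ) * hQ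
end

section
/- Let h : U → ℝ satisfy the polar-coordinate Laplace equation (∂²_ρ + ρ⁻¹∂_ρ + ρ⁻²∂²_φ) h(ρ, φ) = 0 on a domain with ρ > 0. Under the substitution ρ = tan(θ/2) with 0 < θ < π, one has the operator identity ∂²_ρ + ρ⁻¹∂_ρ + ρ⁻²∂²_φ = 4cos⁴(θ/2) · [ (sin θ)⁻¹ ∂_θ(sin θ ∂_θ) + (sin θ)⁻² ∂²_φ ]. Consequently, the function φ(r, θ, φ) := h(tan(θ/2), φ) (independent of r) is harmonic in ℝ³ \ {0}: the full spherical Laplacian r⁻²[∂_r(r²∂_r) + (sinθ)⁻¹∂_θ(sinθ ∂_θ) + (sinθ)⁻²∂²_φ] applied to it vanishes. -/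
/-!
With `ρ = tan (θ / 2)` one has `dρ/dθ = (1 + ρ²) / 2`, `sin θ = 2ρ / (1 + ρ²)` and
`cos² (θ / 2) = 1 / (1 + ρ²)`, so the chain rule turns the angular part of the spherical
Laplacian, multiplied by `4 cos⁴ (θ / 2)`, into the polar Laplacian in `(ρ, φ)`. A function of
`(θ, φ)` alone has no radial part, hence it is harmonic on `ℝ³ \ {0}` exactly when its
angular Laplacian vanishes, i.e. when `h` is harmonic in the plane.
-/

open Real Set Filter Topology

namespace Real

theorem hasDerivAt_tan_half {t : ℝ} (hc : cos (t / 2) ≠ 0) :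
    HasDerivAt (fun u => tan (u / 2)) ((1 + tan (t / 2) ^ 2) / 2) t := by
  refine ((hasDerivAt_tan hc).comp t ((hasDerivAt_id t).div_const 2)).congr_deriv ?_
  rw [← inv_one_add_tan_sq hc]
  field_simp

theorem cos_half_ne_zero_of_mem_Ioo {t : ℝ} (ht : t ∈ Ioo 0 π) : cos (t / 2) ≠ 0 :=
  (cos_pos_of_mem_Ioo ⟨by linarith [ht.1, pi_pos], by linarith [ht.2]⟩).ne'

theorem tan_half_pos_of_mem_Ioo {t : ℝ} (ht : t ∈ Ioo 0 π) : 0 < tan (t / 2) :=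
  tan_pos_of_pos_of_lt_pi_div_two (by linarith [ht.1]) (by linarith [ht.2])

theorem cos_eq_two_mul_inv_one_add_tan_half_sq_sub_one {t : ℝ} (hc : cos (t / 2) ≠ 0) :
    cos t = 2 * (1 + tan (t / 2) ^ 2)⁻¹ - 1 := by
  rw [inv_one_add_tan_sq hc, ← cos_two_mul, mul_div_cancel₀ t two_ne_zero]

end Real

section TanHalfSubstitution

variable {f : ℝ → ℝ}

theorem hasDerivAt_comp_tan_half {t : ℝ} (hf : DifferentiableAt ℝ f (tan (t / 2)))
    (hc : cos (t / 2) ≠ 0) :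
    HasDerivAt (fun u => f (tan (u / 2)))
      (deriv f (tan (t / 2)) * ((1 + tan (t / 2) ^ 2) / 2)) t :=
  hf.hasDerivAt.comp t (hasDerivAt_tan_half hc)

theorem deriv_sin_mul_deriv_comp_tan_half (hf : ContDiff ℝ 2 f) {θ : ℝ} (hθ : θ ∈ Ioo 0 π) :
    deriv (fun t => sin t * deriv (fun s => f (tan (s / 2))) t) θ =
      cos θ * (deriv f (tan (θ / 2)) * ((1 + tan (θ / 2) ^ 2) / 2)) +
        sin θ * (deriv (deriv f) (tan (θ / 2)) * ((1 + tan (θ / 2) ^ 2) / 2) ^ 2 +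
          deriv f (tan (θ / 2)) * (tan (θ / 2) * ((1 + tan (θ / 2) ^ 2) / 2))) := by
  have hf' : ContDiff ℝ (1 + 1) f := hf
  obtain ⟨hf_diff, -, hf'_smooth⟩ := contDiff_succ_iff_deriv.mp hf'
  have hf'_diff : Differentiable ℝ (deriv f) := hf'_smooth.differentiable one_ne_zero
  have hc := cos_half_ne_zero_of_mem_Ioo hθ
  have h_eventually : (fun t => sin t * deriv (fun s => f (tan (s / 2))) t) =ᶠ[𝓝 θ]
      fun t => sin t * (deriv f (tan (t / 2)) * ((1 + tan (t / 2) ^ 2) / 2)) := by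
    filter_upwards [isOpen_Ioo.mem_nhds hθ] with t ht
    rw [(hasDerivAt_comp_tan_half (hf_diff _) (cos_half_ne_zero_of_mem_Ioo ht)).deriv]
  have h_tan := hasDerivAt_tan_half hc
  have h_deriv_f := (hf'_diff (tan (θ / 2))).hasDerivAt.comp θ h_tan
  have h_weight := ((h_tan.pow 2).const_add 1).div_const 2
  have h_product : HasDerivAt
      (fun t => sin t * (deriv f (tan (t / 2)) * ((1 + tan (t / 2) ^ 2) / 2))) _ θ :=
    (hasDerivAt_sin θ).mul (h_deriv_f.mul h_weight)
  rw [h_eventually.deriv_eq, h_product.deriv]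
  simp only [Function.comp_apply, Nat.cast_ofNat]
  ring

/-- `L` stands for the `φφ`-derivative, which the two Laplacians share. -/
theorem polar_laplacian_tan_half_eq (hf : ContDiff ℝ 2 f) (L : ℝ) {θ : ℝ} (hθ : θ ∈ Ioo 0 π) :
    deriv (deriv f) (tan (θ / 2)) + (tan (θ / 2))⁻¹ * deriv f (tan (θ / 2)) +
        (tan (θ / 2))⁻¹ ^ 2 * L =
      4 * cos (θ / 2) ^ 4 *
        ((sin θ)⁻¹ * deriv (fun t => sin t * deriv (fun s => f (tan (s / 2))) t) θ +
          (sin θ)⁻¹ ^ 2 * L) := by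
  have hc := cos_half_ne_zero_of_mem_Ioo hθ
  have hρ := (tan_half_pos_of_mem_Ioo hθ).ne'
  have hcos4 : cos (θ / 2) ^ 4 = ((1 + tan (θ / 2) ^ 2)⁻¹) ^ 2 := by
    rw [inv_one_add_tan_sq hc]; ring
  rw [deriv_sin_mul_deriv_comp_tan_half hf hθ, hcos4,
    sin_eq_two_mul_tan_half_div_one_add_tan_half_sq,
    cos_eq_two_mul_inv_one_add_tan_half_sq_sub_one hc]
  field_simp
  ring

end TanHalfSubstitution

theorem conical_harmonic_function
    (h : ℝ → ℝ → ℝ)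
    (hh : ContDiff ℝ 2 (fun q : ℝ × ℝ => h q.1 q.2))
    (hharm : ∀ ρ φ : ℝ, 0 < ρ →
      deriv (deriv (fun s => h s φ)) ρ + ρ⁻¹ * deriv (fun s => h s φ) ρ +
        ρ⁻¹ ^ 2 * deriv (deriv (fun t => h ρ t)) φ = 0) :
    ∀ r θ φ : ℝ, 0 < r → 0 < θ → θ < Real.pi →
      -- the operator identity under the substitution ρ = tan (θ/2)
      (deriv (deriv (fun s => h s φ)) (Real.tan (θ / 2)) +
          (Real.tan (θ / 2))⁻¹ * deriv (fun s => h s φ) (Real.tan (θ / 2)) +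
          ((Real.tan (θ / 2))⁻¹) ^ 2 *
            deriv (deriv (fun t => h (Real.tan (θ / 2)) t)) φ =
        4 * Real.cos (θ / 2) ^ 4 *
          ((Real.sin θ)⁻¹ *
              deriv (fun t => Real.sin t *
                deriv (fun s => h (Real.tan (s / 2)) φ) t) θ +
            ((Real.sin θ)⁻¹) ^ 2 *
              deriv (deriv (fun t => h (Real.tan (θ / 2)) t)) φ)) ∧
      -- hence h(tan(θ/2), φ), viewed as a function on ℝ³ \ {0} independent of r,
      -- is annihilated by the full spherical Laplacian
      (r ^ 2)⁻¹ *
        (deriv (fun s : ℝ => s ^ 2 *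
            deriv (fun _ : ℝ => h (Real.tan (θ / 2)) φ) s) r +
          (Real.sin θ)⁻¹ *
            deriv (fun t => Real.sin t *
              deriv (fun s => h (Real.tan (s / 2)) φ) t) θ +
          ((Real.sin θ)⁻¹) ^ 2 *
            deriv (deriv (fun t => h (Real.tan (θ / 2)) t)) φ) = 0 := by
  intro r θ φ _ hθ0 hθπ
  have hθ : θ ∈ Ioo 0 π := ⟨hθ0, hθπ⟩
  have hf : ContDiff ℝ 2 fun s => h s φ := hh.comp (contDiff_id.prodMk contDiff_const)
  have h_identity := polar_laplacian_tan_half_eq hf (deriv (deriv (fun t => h (tan (θ / 2)) t)) φ) hθ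
  refine ⟨h_identity, ?_⟩
  have h_angular := h_identity.symm.trans (hharm _ φ (tan_half_pos_of_mem_Ioo hθ))
  have hcos4 : 4 * cos (θ / 2) ^ 4 ≠ 0 := by
    have := cos_half_ne_zero_of_mem_Ioo hθ
    positivity
  simp only [deriv_const, mul_zero, zero_add, (mul_eq_zero.mp h_angular).resolve_left hcos4]
end
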